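/- Fix a simple graph G on a vertex type V and a symmetric edge-weight function w : V → V → ℝ≥0, and fix a source set S ⊆ V. Let R ⊆ V satisfy S ⊆ R. Then for every vertex v ∉ R, the weighted distance satisfies d_w(S, v) ≥ θ_R, where θ_R = ⨅_{v' ∉ R} D_R(v') is the frontier bound of R. (Every walk from S to a vertex outside R must cross an edge from R to its complement, and edge weights are nonnegative.) -/

import Mathlib

open scoped ENNReal

/-- The weight of a walk: the sum of the edge weights along its darts. -/
noncomputable def walkWeight {V : Type*} (G : SimpleGraph V) (w : V → V → NNReal)
    {u v : V} (p : G.Walk u v) : ℝ≥0∞ :=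
  (p.darts.map fun d => (w d.toProd.1 d.toProd.2 : ℝ≥0∞)).sum

/-- The weighted distance from a source set `S` to a vertex `v`: the infimum of
the weights of all walks from some vertex of `S` to `v` (`∞` if there is none). -/
noncomputable def wdist {V : Type*} (G : SimpleGraph V) (w : V → V → NNReal)
    (S : Set V) (v : V) : ℝ≥0∞ :=
  ⨅ (s : V) (_ : s ∈ S) (p : G.Walk s v), walkWeight G w p

/-- The frontier value `D_R(v)` of a vertex `v ∉ R`. -/
noncomputable def frontierVal {V : Type*} (G : SimpleGraph V) (w : V → V → NNReal)
    (S R : Set V) (v : V) : ℝ≥0∞ :=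
  ⨅ (u : V) (_ : u ∈ R) (_ : G.Adj u v), (wdist G w S u + (w u v : ℝ≥0∞))

/-- The frontier bound `θ_R = ⨅_{v ∉ R} D_R(v)`. -/
noncomputable def frontierBound {V : Type*} (G : SimpleGraph V) (w : V → V → NNReal)
    (S R : Set V) : ℝ≥0∞ :=
  ⨅ (v : V) (_ : v ∉ R), frontierVal G w S R v

/-!
Along a walk from a source `s ∈ S ⊆ R` to `v ∉ R`, the quantity `d_w(S, u) + (weight of the
rest of the walk)` at the current vertex `u` never increases, by the triangle inequality
`d_w(S, b) ≤ d_w(S, u) + w(u, b)`. It starts as the weight of the walk, since `d_w(S, s) = 0`,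
and at the first edge `u b` leaving `R` it is at least `d_w(S, u) + w(u, b) ≥ D_R(b) ≥ θ_R`.
-/

section

variable {V : Type*} {G : SimpleGraph V} (w : V → V → NNReal)

@[simp]
lemma walkWeight_nil {u : V} : walkWeight G w (SimpleGraph.Walk.nil : G.Walk u u) = 0 := by
  simp [walkWeight]

@[simp]
lemma walkWeight_cons {u b v : V} (h : G.Adj u b) (q : G.Walk b v) :
    walkWeight G w (q.cons h) = w u b + walkWeight G w q := by
  simp [walkWeight]

@[simp]
lemma walkWeight_concat {s u b : V} (p : G.Walk s u) (h : G.Adj u b) :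
    walkWeight G w (p.concat h) = walkWeight G w p + w u b := by
  simp [walkWeight, SimpleGraph.Walk.darts_concat]

variable {S : Set V}

lemma wdist_le_walkWeight {s v : V} (hs : s ∈ S) (p : G.Walk s v) :
    wdist G w S v ≤ walkWeight G w p :=
  iInf₂_le_of_le s hs (iInf_le _ p)

lemma wdist_eq_zero_of_mem {s : V} (hs : s ∈ S) : wdist G w S s = 0 :=
  nonpos_iff_eq_zero.mp <| (wdist_le_walkWeight w hs .nil).trans_eq (walkWeight_nil w)

lemma wdist_le_wdist_add_of_adj {u b : V} (h : G.Adj u b) :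
    wdist G w S b ≤ wdist G w S u + w u b := by
  conv_rhs => rw [wdist]
  simp only [ENNReal.iInf_add]
  refine le_iInf₂ fun s hs => le_iInf fun p => ?_
  simpa using wdist_le_walkWeight w hs (p.concat h)

variable {R : Set V}

lemma frontierBound_le_wdist_add_of_adj {u b : V} (hu : u ∈ R) (hb : b ∉ R) (h : G.Adj u b) :
    frontierBound G w S R ≤ wdist G w S u + w u b :=
  iInf₂_le_of_le b hb (iInf₂_le_of_le u hu (iInf_le _ h))

lemma frontierBound_le_wdist_add_walkWeight {u v : V} (hu : u ∈ R) (hv : v ∉ R)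
    (p : G.Walk u v) : frontierBound G w S R ≤ wdist G w S u + walkWeight G w p := by
  induction p with
  | nil => exact absurd hu hv
  | @cons u b v h q ih =>
    rw [walkWeight_cons, ← add_assoc]
    by_cases hb : b ∈ R
    · calc frontierBound G w S R ≤ wdist G w S b + walkWeight G w q := ih hb hv
        _ ≤ wdist G w S u + w u b + walkWeight G w q := by
          gcongr; exact wdist_le_wdist_add_of_adj w h
    · exact (frontierBound_le_wdist_add_of_adj w hu hb h).trans le_self_add

end

theorem wdist_ge_frontierBound_general {V : Type*} (G : SimpleGraph V) (w : V → V → NNReal)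
    (S R : Set V) (hSR : S ⊆ R) :
    ∀ v ∉ R, wdist G w S v ≥ frontierBound G w S R := by
  intro v hv
  refine le_iInf₂ fun s hs => le_iInf fun p => ?_
  simpa [wdist_eq_zero_of_mem w hs] using
    frontierBound_le_wdist_add_walkWeight (S := S) w (hSR hs) hv p

/-- if `S ⊆ R`, then for every vertex `v ∉ R` the weighted distance
`d_w(S, v)` is at least the frontier bound `θ_R`. -/
theorem wdist_ge_frontierBound {V : Type*} (G : SimpleGraph V) (w : V → V → NNReal)
    (hw : ∀ u v, w u v = w v u) (S R : Set V) (hSR : S ⊆ R) :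
    ∀ v ∉ R, wdist G w S v ≥ frontierBound G w S R :=
  wdist_ge_frontierBound_general G w S R hSR
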